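/- Graph state reduction to a Bell state: let G be a graph, let i, j be adjacent vertices, and project every vertex in ν_{i,j} (the set of neighbors of i or j other than i, j) onto σ_z eigenstates with outcomes recorded; the remaining (renormalized) state of qubits i and j is (σ_z^{m_i} ⊗ σ_z^{m_j})(|0+⟩ + |1−⟩)/√2 up to sign, where m_i (resp. m_j) is the number of neighbors of i (excluding j) (resp. of j excluding i) that were projected onto the −1 eigenstate |1⟩, and all other projected qubits are in definite σ_z eigenstates. In particular, each σ_z outcome string on ν_{i,j} occurs with probability 1/2^{|ν_{i,j}|}. -/

import Mathlib

/-!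
Write μ(f) for the number of edges of G whose endpoints both carry a 1 in f, so that the amplitude
of f in the graph state is (−1)^{μ(f)}/√(2^N). Switching a vertex off removes exactly the edges
from it to the other 1-vertices, so μ(f) = μ(f[i ↦ 0]) + f_i · #{v ~ i | f v = 1}. Doing this for
i and then j shows that, on the strings agreeing with t off {i, j},
μ(f) = μ(t[i ↦ 0, j ↦ 0]) + m_i f_i + m_j f_j + f_i f_j,
where the last term comes from the edge ij. The first summand is a global sign, the middle ones are
the σ_z corrections and (−1)^{f_i f_j} is the Bell state (|0+⟩ + |1−⟩)/√2. All 2^N amplitudes have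
modulus 1/√(2^N) and exactly four strings survive the projection, whence the probability 4/2^N.
-/

noncomputable def graphStateCF (N : ℕ) (G : SimpleGraph (Fin N)) [DecidableRel G.Adj] :
    (Fin N → Fin 2) → ℂ := fun f =>
  (1 / Real.sqrt (2 ^ N) : ℂ) *
    (-1 : ℂ) ^ (Finset.univ.filter
      (fun p : Fin N × Fin N =>
        p.1 < p.2 ∧ G.Adj p.1 p.2 ∧ f p.1 = 1 ∧ f p.2 = 1)).card

open Finset Function

section EdgesOnOnes

variable {V : Type*} [Fintype V] [LinearOrder V] (G : SimpleGraph V) [DecidableRel G.Adj]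

def edgesOnOnes (f : V → Fin 2) : Finset (V × V) :=
  {p | p.1 < p.2 ∧ G.Adj p.1 p.2 ∧ f p.1 = 1 ∧ f p.2 = 1}

lemma card_edgesOnOnes_eq_update_zero_add (f : V → Fin 2) (i : V) :
    #(edgesOnOnes G f) =
      #(edgesOnOnes G (update f i 0)) + (f i : ℕ) * #{v | G.Adj i v ∧ f v = 1} := by
  have h_off :
      edgesOnOnes G (update f i 0) = {p ∈ edgesOnOnes G f | ¬(p.1 = i ∨ p.2 = i)} := by
    ext p
    simp only [edgesOnOnes, mem_filter, mem_univ, true_and, update_apply]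
    grind
  have h_at : #{p ∈ edgesOnOnes G f | p.1 = i ∨ p.2 = i} =
      (f i : ℕ) * #{v | G.Adj i v ∧ f v = 1} := by
    rcases Fin.exists_fin_two.mp ⟨f i, rfl⟩ with h | h
    · rw [h, Fin.val_zero, zero_mul, card_eq_zero, filter_eq_empty_iff]
      simp only [edgesOnOnes, mem_filter, mem_univ, true_and]
      grind
    · rw [h, Fin.val_one, one_mul]
      apply card_nbij' (fun p => if p.1 = i then p.2 else p.1)
        (fun v => if i < v then (i, v) else (v, i))
      all_goals
        simp only [edgesOnOnes, mem_filter, mem_univ, true_and, Set.MapsTo, Set.LeftInvOn,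
          coe_filter, Set.mem_ofPred_eq]
        grind [SimpleGraph.adj_comm, SimpleGraph.irrefl]
  rw [h_off, ← h_at, add_comm, card_filter_add_card_filter_not]

lemma card_edgesOnOnes_of_eqOn_compl_pair {i j : V} (hij : G.Adj i j) {f t : V → Fin 2}
    (hft : ∀ v, v ≠ i → v ≠ j → f v = t v) :
    #(edgesOnOnes G f) = #(edgesOnOnes G (update (update t i 0) j 0)) +
      #{v | G.Adj i v ∧ v ≠ j ∧ t v = 1} * (f i : ℕ) +
      #{v | G.Adj j v ∧ v ≠ i ∧ t v = 1} * (f j : ℕ) + (f i : ℕ) * (f j : ℕ) := by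
  have hne := hij.ne
  have h_rest : update (update f i 0) j 0 = update (update t i 0) j 0 := by
    funext v
    simp only [update_apply]
    grind
  have h_nbr_i :
      #{v | G.Adj i v ∧ f v = 1} = #{v | G.Adj i v ∧ v ≠ j ∧ t v = 1} + f j := by
    have h_erase : ({v | G.Adj i v ∧ v ≠ j ∧ t v = 1} : Finset V) =
        ({v | G.Adj i v ∧ f v = 1} : Finset V).erase j := by
      ext v
      simp only [mem_filter, mem_univ, true_and, mem_erase]
      grind [SimpleGraph.irrefl]
    rw [h_erase]
    rcases Fin.exists_fin_two.mp ⟨f j, rfl⟩ with h | h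
    · rw [h, Fin.val_zero, add_zero, erase_eq_of_notMem (by simp [h])]
    · rw [h, Fin.val_one, card_erase_add_one (by simp [h, hij])]
  have h_nbr_j :
      #{v | G.Adj j v ∧ update f i 0 v = 1} = #{v | G.Adj j v ∧ v ≠ i ∧ t v = 1} := by
    congr 1
    ext v
    simp only [mem_filter, mem_univ, true_and, update_apply]
    grind [SimpleGraph.irrefl]
  rw [card_edgesOnOnes_eq_update_zero_add G f i,
    card_edgesOnOnes_eq_update_zero_add G (update f i 0) j, h_rest, h_nbr_j,
    update_of_ne hne.symm, h_nbr_i]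
  ring

end EdgesOnOnes

-- The instance is a parameter since `∀` over `Fin n` is decided by `Nat.decidableForallFin`.
lemma card_eqOn_compl_pair {V α : Type*} [Fintype V] [DecidableEq V] [Fintype α]
    {i j : V} (hij : i ≠ j) (t : V → α)
    [DecidablePred fun f : V → α => ∀ v, v ≠ i → v ≠ j → f v = t v] :
    #{f : V → α | ∀ v, v ≠ i → v ≠ j → f v = t v} = Fintype.card α ^ 2 := by
  rw [sq, ← Fintype.card_prod, ← card_univ]
  apply card_nbij' (fun f => (f i, f j)) (fun p => update (update t i p.1) j p.2)
  all_goals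
    simp only [Set.MapsTo, Set.LeftInvOn, coe_filter, coe_univ, Set.mem_univ,
      Set.mem_ofPred_eq, mem_univ, true_and, funext_iff, update_apply]
    grind

lemma one_div_sqrt_two_pow_eq {N : ℕ} (hN : 2 ≤ N) :
    (1 / Real.sqrt (2 ^ N) : ℂ) = 1 / Real.sqrt (2 ^ (N - 2)) * (1 / 2) := by
  obtain ⟨k, rfl⟩ := Nat.exists_eq_add_of_le' hN
  rw [Nat.add_sub_cancel, pow_add, Real.sqrt_mul (by positivity), Real.sqrt_sq zero_le_two]
  push_cast
  ring

lemma neg_one_pow_val_mul_val (a b : Fin 2) :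
    (-1 : ℂ) ^ ((a : ℕ) * (b : ℕ)) = if a = 1 ∧ b = 1 then -1 else 1 := by
  fin_cases a <;> fin_cases b <;> simp

section GraphState

variable {N : ℕ} (G : SimpleGraph (Fin N)) [DecidableRel G.Adj]

lemma graphStateCF_eq (f : Fin N → Fin 2) :
    graphStateCF N G f = (1 / Real.sqrt (2 ^ N) : ℂ) * (-1) ^ #(edgesOnOnes G f) := rfl

lemma norm_graphStateCF_sq (f : Fin N → Fin 2) : ‖graphStateCF N G f‖ ^ 2 = 1 / 2 ^ N := by
  rw [graphStateCF_eq, norm_mul, norm_pow, norm_neg, norm_one, one_pow, mul_one, norm_div,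
    norm_one, Complex.norm_real, Real.norm_of_nonneg (Real.sqrt_nonneg _), div_pow, one_pow,
    Real.sq_sqrt (by positivity)]

lemma sum_norm_sq_projected_graphStateCF {i j : Fin N} (hij : i ≠ j) (t : Fin N → Fin 2) :
    ∑ f : Fin N → Fin 2,
        ‖(if ∀ v, v ≠ i → v ≠ j → f v = t v then graphStateCF N G f else 0 : ℂ)‖ ^ 2 =
      1 / 2 ^ (N - 2) := by
  obtain ⟨k, rfl⟩ :=
    Nat.exists_eq_add_of_le' (Fin.nontrivial_iff_two_le.mp (nontrivial_of_ne i j hij))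
  simp_rw [apply_ite (fun z : ℂ => ‖z‖ ^ 2), norm_graphStateCF_sq, norm_zero,
    zero_pow two_ne_zero]
  rw [sum_ite, sum_const_zero, add_zero, sum_const, nsmul_eq_mul, card_eqOn_compl_pair hij t,
    Fintype.card_fin, Nat.add_sub_cancel, pow_add]
  ring

end GraphState

theorem stmt17_general (N : ℕ) (G : SimpleGraph (Fin N)) [DecidableRel G.Adj]
    (i j : Fin N) (hij : G.Adj i j)
    (t : Fin N → Fin 2) :
    (∑ f : Fin N → Fin 2,
        ‖(if ∀ v, v ≠ i → v ≠ j → f v = t v then graphStateCF N G f else 0 : ℂ)‖ ^ 2)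
      = 1 / 2 ^ (N - 2) ∧
    ∃ s : ℂ, (s = 1 ∨ s = -1) ∧
      (fun f : Fin N → Fin 2 =>
          (if ∀ v, v ≠ i → v ≠ j → f v = t v then graphStateCF N G f else 0 : ℂ))
        = fun f =>
          if ∀ v, v ≠ i → v ≠ j → f v = t v then
            s * (1 / Real.sqrt (2 ^ (N - 2)) : ℂ) *
              (-1 : ℂ) ^ ((Finset.univ.filter
                  (fun v : Fin N => G.Adj i v ∧ v ≠ j ∧ t v = 1)).card * (f i : ℕ)) *
              (-1 : ℂ) ^ ((Finset.univ.filter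
                  (fun v : Fin N => G.Adj j v ∧ v ≠ i ∧ t v = 1)).card * (f j : ℕ)) *
              ((1/2 : ℂ) * (if f i = 1 ∧ f j = 1 then -1 else 1))
          else 0 := by
  have hN : 2 ≤ N := Fin.nontrivial_iff_two_le.mp (nontrivial_of_ne i j hij.ne)
  refine ⟨sum_norm_sq_projected_graphStateCF G hij.ne t,
    (-1) ^ #(edgesOnOnes G (update (update t i 0) j 0)), neg_one_pow_eq_or ℂ _,
    funext fun f => ?_⟩
  by_cases hft : ∀ v, v ≠ i → v ≠ j → f v = t v
  · rw [if_pos hft, if_pos hft, graphStateCF_eq, card_edgesOnOnes_of_eqOn_compl_pair G hij hft,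
      one_div_sqrt_two_pow_eq hN, ← neg_one_pow_val_mul_val, pow_add, pow_add, pow_add]
    ring
  · rw [if_neg hft, if_neg hft]

/-- Graph state reduction to a Bell state: projecting all qubits other than two
adjacent vertices i, j (all of which are assumed neighbors of i or j) onto σ_z
eigenstates with outcome string t occurs with probability 1/2^{N−2}, and the
projected state of qubits i, j is, up to a global sign,
(1/√(2^{N−2})) (σ_z^{m_i} ⊗ σ_z^{m_j})(|0+⟩ + |1−⟩)/√2, where m_i (resp. m_j) is the
number of neighbors of i excluding j (resp. of j excluding i) projected onto |1⟩. -/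
theorem stmt17 (N : ℕ) (hN : 2 ≤ N) (G : SimpleGraph (Fin N)) [DecidableRel G.Adj]
    (i j : Fin N) (hij : G.Adj i j)
    (hcov : ∀ v : Fin N, v ≠ i → v ≠ j → G.Adj i v ∨ G.Adj j v)
    (t : Fin N → Fin 2) :
    (∑ f : Fin N → Fin 2,
        ‖(if ∀ v, v ≠ i → v ≠ j → f v = t v then graphStateCF N G f else 0 : ℂ)‖ ^ 2)
      = 1 / 2 ^ (N - 2) ∧
    ∃ s : ℂ, (s = 1 ∨ s = -1) ∧
      (fun f : Fin N → Fin 2 =>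
          (if ∀ v, v ≠ i → v ≠ j → f v = t v then graphStateCF N G f else 0 : ℂ))
        = fun f =>
          if ∀ v, v ≠ i → v ≠ j → f v = t v then
            s * (1 / Real.sqrt (2 ^ (N - 2)) : ℂ) *
              (-1 : ℂ) ^ ((Finset.univ.filter
                  (fun v : Fin N => G.Adj i v ∧ v ≠ j ∧ t v = 1)).card * (f i : ℕ)) *
              (-1 : ℂ) ^ ((Finset.univ.filter
                  (fun v : Fin N => G.Adj j v ∧ v ≠ i ∧ t v = 1)).card * (f j : ℕ)) *
              ((1/2 : ℂ) * (if f i = 1 ∧ f j = 1 then -1 else 1))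
          else 0 :=
  stmt17_general N G i j hij t
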